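/- arXiv:1807.01931 — 7 statements merged into one kernel-verified Lean document; each statement's English description precedes it below -/
import Mathlib

section
/- For $n \geq 3$, the $\mathbb{Z}$-submodule of $\mathbb{Z}^3$ spanned by the vectors $(n(n-1)A_i, 0, n(n+1)B_i)$ and $(\tfrac{n(n-1)}{2}A_i, nB_i, \tfrac{n(n+1)}{2}B_i)$ for $1 \leq i \leq n-1$ equals the submodule spanned by $(\tfrac{n(n-1)}{2}, n, \tfrac{n(n+1)}{2})$, $(n(n-1), 0, 0)$, and $(0, 2n, 0)$. -/
/-- `A_i = ∑_{j=1}^i (-1)^{i+j} C(i,j) j^{n-2}` -/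
def A (n i : ℕ) : ℤ := ∑ j ∈ Finset.Icc 1 i, (-1) ^ (i + j) * (i.choose j : ℤ) * (j : ℤ) ^ (n - 2)

/-- `B_i = ∑_{j=1}^i (-1)^{i+j} C(i,j) j^{n-1}` -/
def B (n i : ℕ) : ℤ := ∑ j ∈ Finset.Icc 1 i, (-1) ^ (i + j) * (i.choose j : ℤ) * (j : ℤ) ^ (n - 1)

/-!
`A_i` and `B_i` are the `i`-th forward differences at `0` of `x ^ (n - 2)` and `x ^ (n - 1)`.
Newton's forward-difference series, evaluated at `-1`, gives `∑ (-1)^i A_i = (-1)^(n-2)` and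
`∑ (-1)^i B_i = (-1)^(n-1)`, so the integers `t_i = (A_i - B_i) / 2` have alternating sum `±1`.
With `w, p, q` the three vectors on the right, the generators on the left are
`v_i = B_i w + t_i p` and `u_i = 2 v_i - B_i q`; since `v_1 = w`, the span of the `u_i, v_i`
contains `w`, `q = 2 v_1 - u_1` and every `t_i p = v_i - B_i w`, hence `p`.
-/

open Finset fwdDiff

theorem eq_alternating_sum_fwdDiff_iter_add {M G : Type*} [AddCommMonoid M] [AddCommGroup G]
    (h : M) (f : M → G) (y : M) (N : ℕ) :
    f y = ∑ k ∈ range N, (-1 : ℤ) ^ k • (Δ_[h])^[k] f (y + h) +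
      (-1 : ℤ) ^ N • (Δ_[h])^[N] f y := by
  induction N with
  | zero => simp
  | succ N ih =>
    rw [ih, sum_range_succ, Function.iterate_succ_apply', fwdDiff, pow_succ]
    simp only [smul_sub, mul_neg_one, neg_smul]
    abel

theorem sum_range_neg_one_pow_mul_fwdDiff_iter_pow {R : Type*} [CommRing R] {m N : ℕ}
    (hmN : m < N) :
    ∑ k ∈ range N, (-1 : R) ^ k * (Δ_[1])^[k] (fun r : R ↦ r ^ m) 0 = (-1) ^ m := by
  have := eq_alternating_sum_fwdDiff_iter_add (1 : R) (fun r ↦ r ^ m) (-1) N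
  simpa [fwdDiff_iter_pow_eq_zero_of_lt hmN, Int.cast_smul_eq_zsmul] using this.symm

theorem sum_Icc_alternating_choose_mul_pow {m : ℕ} (hm : m ≠ 0) (i : ℕ) :
    ∑ j ∈ Icc 1 i, (-1 : ℤ) ^ (i + j) * (i.choose j : ℤ) * (j : ℤ) ^ m =
      (Δ_[1])^[i] (fun r : ℤ ↦ r ^ m) 0 := by
  rw [fwdDiff_iter_eq_sum_shift]
  refine (sum_congr rfl fun j hj ↦ ?_).trans
    (sum_subset (fun j hj ↦ by simp at hj ⊢; omega) fun j hj hj' ↦ ?_)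
  · rw [show i + j = (i - j) + 2 * j by have := (mem_Icc.mp hj).2; omega, pow_add, pow_mul]
    simp
  · obtain rfl : j = 0 := by simp at hj hj'; omega
    simp [hm]

theorem A_eq_fwdDiff_iter {n : ℕ} (hn : 3 ≤ n) (i : ℕ) :
    A n i = (Δ_[1])^[i] (fun r : ℤ ↦ r ^ (n - 2)) 0 :=
  sum_Icc_alternating_choose_mul_pow (by omega) i

theorem B_eq_fwdDiff_iter {n : ℕ} (hn : 2 ≤ n) (i : ℕ) :
    B n i = (Δ_[1])^[i] (fun r : ℤ ↦ r ^ (n - 1)) 0 :=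
  sum_Icc_alternating_choose_mul_pow (by omega) i

theorem two_dvd_A_sub_B {n : ℕ} (hn : 3 ≤ n) (i : ℕ) : 2 ∣ A n i - B n i := by
  obtain ⟨k, rfl⟩ : ∃ k, n = k + 3 := ⟨n - 3, by omega⟩
  rw [A, B, ← sum_sub_distrib]
  refine dvd_sum fun j _ ↦ ?_
  have hsplit : (-1) ^ (i + j) * (i.choose j : ℤ) * (j : ℤ) ^ (k + 3 - 2) -
      (-1) ^ (i + j) * (i.choose j : ℤ) * (j : ℤ) ^ (k + 3 - 1) =
      -((-1) ^ (i + j) * (i.choose j : ℤ) * (j : ℤ) ^ k) * ((j : ℤ) * (j - 1)) := by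
    simp only [show k + 3 - 2 = k + 1 by omega, show k + 3 - 1 = k + 2 by omega]
    ring
  rw [hsplit]
  exact (Int.even_mul_pred_self j).two_dvd.mul_left _

theorem sum_Icc_neg_one_pow_mul_A_sub_B {n : ℕ} (hn : 3 ≤ n) :
    ∑ i ∈ Icc 1 (n - 1), (-1) ^ i * (A n i - B n i) = 2 * (-1) ^ n := by
  obtain ⟨k, rfl⟩ : ∃ k, n = k + 2 := ⟨n - 2, by omega⟩
  have hA : ∑ i ∈ range (k + 2), (-1) ^ i * A (k + 2) i = (-1) ^ k := by
    simp_rw [A_eq_fwdDiff_iter hn]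
    exact sum_range_neg_one_pow_mul_fwdDiff_iter_pow (by omega)
  have hB : ∑ i ∈ range (k + 2), (-1) ^ i * B (k + 2) i = (-1) ^ (k + 1) := by
    simp_rw [B_eq_fwdDiff_iter (by omega : 2 ≤ k + 2)]
    exact sum_range_neg_one_pow_mul_fwdDiff_iter_pow (by omega)
  rw [sum_subset (s₂ := range (k + 2)) (fun i hi ↦ by simp at hi ⊢; omega) fun i hi hi' ↦ by
    obtain rfl : i = 0 := by simp at hi hi'; omega
    simp [A, B]]
  simp only [mul_sub, sum_sub_distrib, hA, hB]
  ring

section span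

variable {R M ι : Type*} [CommRing R] [AddCommGroup M] [Module R M]

open Submodule in
theorem span_biUnion_eq_span_triple (s : Finset ι) (w p q : M) (b t c : ι → R) {i₀ : ι}
    (hi₀ : i₀ ∈ s) (hb : b i₀ = 1) (ht : t i₀ = 0) (hc : ∑ i ∈ s, c i * t i = 1) :
    span R (⋃ i ∈ s, {(2 : R) • (b i • w + t i • p) - b i • q, b i • w + t i • p}) =
      span R {w, p, q} := by
  apply le_antisymm
  · have hw : w ∈ span R {w, p, q} := subset_span (by simp)
    have hp : p ∈ span R {w, p, q} := subset_span (by simp)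
    have hq : q ∈ span R {w, p, q} := subset_span (by simp)
    simp only [span_le, Set.iUnion_subset_iff, Set.insert_subset_iff,
      Set.singleton_subset_iff, SetLike.mem_coe]
    intro i _
    have hv := add_mem (smul_mem _ (b i) hw) (smul_mem _ (t i) hp)
    exact ⟨sub_mem (smul_mem _ 2 hv) (smul_mem _ (b i) hq), hv⟩
  · set S := span R (⋃ i ∈ s, {(2 : R) • (b i • w + t i • p) - b i • q, b i • w + t i • p})
    have hu : ∀ i ∈ s, (2 : R) • (b i • w + t i • p) - b i • q ∈ S :=
      fun i hi ↦ subset_span (Set.mem_biUnion hi (by simp))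
    have hv : ∀ i ∈ s, b i • w + t i • p ∈ S :=
      fun i hi ↦ subset_span (Set.mem_biUnion hi (by simp))
    have hw : w ∈ S := by simpa [hb, ht] using hv i₀ hi₀
    have hq : q ∈ S := by
      simpa [hb, ht] using sub_mem (smul_mem S 2 hw) (hu i₀ hi₀)
    have htp : ∀ i ∈ s, t i • p ∈ S := fun i hi ↦ by
      simpa using sub_mem (hv i hi) (smul_mem S (b i) hw)
    have hp : p ∈ S := by
      have := sum_mem fun i hi ↦ smul_mem S (c i) (htp i hi)
      simpa [smul_smul, ← sum_smul, hc] using this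
    simp [span_le, Set.insert_subset_iff, hw, hp, hq]

end span

theorem stmt4 (n : ℕ) (hn : 3 ≤ n) :
    Submodule.span ℤ
      ((⋃ i ∈ Finset.Icc 1 (n - 1),
        ({![(n : ℤ) * (n - 1) * A n i, 0, (n : ℤ) * (n + 1) * B n i],
          ![(n : ℤ) * (n - 1) / 2 * A n i, (n : ℤ) * B n i,
            (n : ℤ) * (n + 1) / 2 * B n i]} : Set (Fin 3 → ℤ)))) =
    Submodule.span ℤ
      ({![(n : ℤ) * (n - 1) / 2, (n : ℤ), (n : ℤ) * (n + 1) / 2],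
        ![(n : ℤ) * (n - 1), 0, 0],
        ![0, 2 * (n : ℤ), 0]} : Set (Fin 3 → ℤ)) := by
  have ha : (n : ℤ) * (n - 1) = 2 * ((n : ℤ) * (n - 1) / 2) :=
    (Int.mul_ediv_cancel' (Int.even_mul_pred_self n).two_dvd).symm
  have hc : (n : ℤ) * (n + 1) = 2 * ((n : ℤ) * (n + 1) / 2) :=
    (Int.mul_ediv_cancel' (Int.even_mul_succ_self n).two_dvd).symm
  set t : ℕ → ℤ := fun i ↦ (A n i - B n i) / 2
  have hAB : ∀ i, A n i - B n i = 2 * t i :=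
    fun i ↦ (Int.mul_ediv_cancel' (two_dvd_A_sub_B hn i)).symm
  have halt : ∑ i ∈ Icc 1 (n - 1), (-1) ^ i * t i = (-1) ^ n := by
    refine mul_left_cancel₀ (two_ne_zero' ℤ) ?_
    rw [mul_sum, ← sum_Icc_neg_one_pow_mul_A_sub_B hn]
    exact sum_congr rfl fun i _ ↦ by rw [hAB]; ring
  have hsum : ∑ i ∈ Icc 1 (n - 1), (-1) ^ n * (-1) ^ i * t i = 1 := by
    simp_rw [mul_assoc, ← mul_sum, halt, ← mul_pow, neg_one_mul, neg_neg, one_pow]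
  rw [← span_biUnion_eq_span_triple (Icc 1 (n - 1)) _ _ _ (B n) t _ (i₀ := 1) (by simp; omega)
    (by simp [B]) (by simp [t, A, B]) hsum]
  refine congrArg _ (Set.iUnion₂_congr fun i _ ↦ ?_)
  set a := (n : ℤ) * (n - 1) / 2
  set c := (n : ℤ) * (n + 1) / 2
  have hA : A n i = B n i + 2 * t i := by linarith [hAB i]
  rw [ha, hc, hA]
  congr 2 <;> ext k <;> fin_cases k <;> simp <;> ring
end

section
/- Let $n \geq 3$ and let $S \subseteq \mathbb{Z}^3$ be the $\mathbb{Z}$-span of $(\tfrac{n(n-1)}{2}, n, \tfrac{n(n+1)}{2})$, $(n(n-1), 0, 0)$, and $(0, 2n, 0)$. The smallest positive integer $m$ such that $m \cdot (1, 0, 1) \in S$ is $\tfrac{1}{2}n(n^2-1)$ if $n$ is odd, and $n(n^2-1)$ if $n$ is even. -/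
/-!
Writing `m • (1, 0, 1) = x • v₁ + y • v₂ + z • v₃`, the middle coordinate forces `x = -2z`; the
other two coordinates then say exactly that `m` is a common multiple of `n(n-1)` and `n(n+1)`,
and every common multiple arises this way. So the answer is
`lcm (n(n-1)) (n(n+1)) = n · lcm (n-1) (n+1)`, and `gcd (n-1) (n+1)` is `2` for odd `n` and `1`
for even `n`.
-/

open Submodule

theorem smul_mem_span_iff_dvd {a b c m : ℤ} (ha : 2 ∣ a) (hb : 2 ∣ b) (hc : c ≠ 0) :
    m • (![1, 0, 1] : Fin 3 → ℤ) ∈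
        span ℤ ({![a / 2, c, b / 2], ![a, 0, 0], ![0, 2 * c, 0]} : Set (Fin 3 → ℤ)) ↔
      a ∣ m ∧ b ∣ m := by
  obtain ⟨a, rfl⟩ := ha
  obtain ⟨b, rfl⟩ := hb
  simp only [mem_span_triple, Int.mul_ediv_cancel_left _ two_ne_zero, funext_iff,
    Fin.forall_fin_succ, IsEmpty.forall_iff, Pi.add_apply, Pi.smul_apply, smul_eq_mul,
    Matrix.cons_val_zero, Matrix.cons_val_succ, mul_zero, mul_one, add_zero, and_true]
  constructor
  · rintro ⟨x, y, z, h0, h1, h2⟩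
    obtain rfl : x = -2 * z := mul_right_cancel₀ hc (by linear_combination h1)
    exact ⟨⟨y - z, by linear_combination -h0⟩, ⟨-z, by linear_combination -h2⟩⟩
  · rintro ⟨⟨p, rfl⟩, ⟨q, hq⟩⟩
    exact ⟨2 * q, p - q, -q, by ring, by ring, by linear_combination -hq⟩

theorem isLeast_pos_common_multiple {a b : ℕ} (ha : 0 < a) (hb : 0 < b) :
    IsLeast {m : ℕ | 0 < m ∧ (a : ℤ) ∣ m ∧ (b : ℤ) ∣ m} (a.lcm b) := by
  simp only [Int.natCast_dvd_natCast]
  exact ⟨⟨Nat.lcm_pos ha hb, Nat.dvd_lcm_left a b, Nat.dvd_lcm_right a b⟩,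
    fun m ⟨hm, ham, hbm⟩ ↦ Nat.le_of_dvd hm (Nat.lcm_dvd ham hbm)⟩

theorem Nat.lcm_sub_one_add_one_of_even {n : ℕ} (hn : Even n) (h : 0 < n) :
    (n - 1).lcm (n + 1) = n ^ 2 - 1 := by
  have hcop : (n - 1).Coprime (n - 1 + 2) :=
    Nat.coprime_self_add_right.2 (Nat.coprime_two_right.2 (Nat.Even.sub_odd h hn odd_one))
  rw [show n - 1 + 2 = n + 1 by omega] at hcop
  rw [hcop.lcm_eq_mul, mul_comm]
  simpa using (Nat.sq_sub_sq n 1).symm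

theorem Nat.two_mul_lcm_sub_one_add_one_of_odd {n : ℕ} (hn : Odd n) :
    2 * (n - 1).lcm (n + 1) = n ^ 2 - 1 := by
  obtain ⟨k, rfl⟩ := hn
  have hcop : k.Coprime (k + 1) := Nat.coprime_self_add_right.2 (Nat.coprime_one_right k)
  rw [show 2 * k + 1 - 1 = 2 * k by omega, show 2 * k + 1 + 1 = 2 * (k + 1) by ring,
    Nat.lcm_mul_left, hcop.lcm_eq_mul]
  exact Nat.eq_sub_of_add_eq (by ring)

theorem Nat.lcm_mul_sub_one_mul_add_one {n : ℕ} (hn : 0 < n) :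
    (n * (n - 1)).lcm (n * (n + 1)) = if Odd n then n * (n ^ 2 - 1) / 2 else n * (n ^ 2 - 1) := by
  rw [Nat.lcm_mul_left]
  split_ifs with hodd
  · rw [← Nat.two_mul_lcm_sub_one_add_one_of_odd hodd, mul_left_comm,
      Nat.mul_div_cancel_left _ two_pos]
  · rw [Nat.lcm_sub_one_add_one_of_even (Nat.not_odd_iff_even.1 hodd) hn]

theorem stmt5 (n : ℕ) (hn : 3 ≤ n) :
    IsLeast {m : ℕ | 0 < m ∧
        ((m : ℤ) • (![1, 0, 1] : Fin 3 → ℤ)) ∈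
          Submodule.span ℤ
            ({![(n : ℤ) * (n - 1) / 2, (n : ℤ), (n : ℤ) * (n + 1) / 2],
              ![(n : ℤ) * (n - 1), 0, 0],
              ![0, 2 * (n : ℤ), 0]} : Set (Fin 3 → ℤ))}
      (if Odd n then n * (n ^ 2 - 1) / 2 else n * (n ^ 2 - 1)) := by
  have hn0 : 0 < n := by omega
  have hcast : ((n * (n - 1) : ℕ) : ℤ) = n * (n - 1) := by push_cast [Nat.one_le_of_lt hn0]; ring
  simp_rw [← Nat.lcm_mul_sub_one_mul_add_one hn0,
    smul_mem_span_iff_dvd (Int.even_mul_pred_self n).two_dvd (Int.even_mul_succ_self n).two_dvd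
      (Nat.cast_ne_zero.2 hn0.ne'), ← hcast, ← Nat.cast_succ, ← Nat.cast_mul]
  exact isLeast_pos_common_multiple (Nat.mul_pos hn0 (by omega)) (by positivity)
end

section
/- The integer matrix $M = \begin{pmatrix} 2m+1 & 2m+1 & 2m^2+m \\ 0 & 4m+2 & 4m^2+4m+1 \\ 4m+2 & 0 & 4m^2+4m+1 \\ 0 & 0 & 8m^2+12m+4 \end{pmatrix}$ has Smith normal form with diagonal entries $2m+1$, $2m+1$, $(2m+1)(4m+4)$ (and a zero row), for every natural number $m$. Equivalently, $\mathbb{Z}^3 / (\text{row span of } M) \cong \mathbb{Z}/(2m+1) \oplus \mathbb{Z}/(2m+1) \oplus \mathbb{Z}/((2m+1)(4m+4))$. -/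
/-!
Write `a = 2m + 1`. The map `x ↦ (x₀ mod a, x₁ mod a, (2x₂ + x₁ - a x₀) mod a(4m + 4))` is onto and
kills the rows of `M`. Conversely, if it kills `x`, then `x₀ = ap`, `x₁ = aq` and
`a(q - p) = 2(a(2m + 2)r - x₂ + m·a·p)` for some `r`; as `a` is odd, `q - p = 2k` is even, and then
`x = (q - 2r)·M₀ + r·M₁ + (r - k)·M₂`. So the row span is exactly the kernel.
-/

namespace SmithM

def rows (m : ℕ) : Set (Fin 3 → ℤ) :=
  {![2 * (m : ℤ) + 1, 2 * m + 1, 2 * m ^ 2 + m],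
    ![0, 4 * (m : ℤ) + 2, 4 * m ^ 2 + 4 * m + 1],
    ![4 * (m : ℤ) + 2, 0, 4 * m ^ 2 + 4 * m + 1],
    ![0, 0, 8 * (m : ℤ) ^ 2 + 12 * m + 4]}

def cokerMap (m : ℕ) :
    (Fin 3 → ℤ) →ₗ[ℤ] ZMod (2 * m + 1) × ZMod (2 * m + 1) × ZMod ((2 * m + 1) * (4 * m + 4)) :=
  AddMonoidHom.toIntLinearMap
    { toFun x := (x 0, x 1, ((2 * x 2 + x 1 - (2 * m + 1) * x 0 : ℤ) : ZMod _))
      map_zero' := by simp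
      map_add' x y := by
        simp only [Pi.add_apply, Int.cast_add, Prod.mk_add_mk, Prod.mk.injEq, true_and]
        push_cast
        ring }

variable {m : ℕ}

theorem cokerMap_apply (x : Fin 3 → ℤ) :
    cokerMap m x = ((x 0 : ZMod (2 * m + 1)), (x 1 : ZMod (2 * m + 1)),
      ((2 * x 2 + x 1 - (2 * m + 1) * x 0 : ℤ) : ZMod ((2 * m + 1) * (4 * m + 4)))) :=
  rfl

theorem cokerMap_eq_zero_iff (x : Fin 3 → ℤ) :
    cokerMap m x = 0 ↔ (2 * m + 1 : ℤ) ∣ x 0 ∧ (2 * m + 1 : ℤ) ∣ x 1 ∧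
      (2 * m + 1) * (4 * m + 4 : ℤ) ∣ 2 * x 2 + x 1 - (2 * m + 1) * x 0 := by
  simp only [cokerMap_apply, Prod.mk_eq_zero, ZMod.intCast_zmod_eq_zero_iff_dvd]
  push_cast
  rfl

theorem rows_subset_ker_cokerMap : rows m ⊆ LinearMap.ker (cokerMap m) := by
  intro x hx
  simp only [rows, Set.mem_insert_iff, Set.mem_singleton_iff] at hx
  rw [SetLike.mem_coe, LinearMap.mem_ker, cokerMap_eq_zero_iff]
  rcases hx with rfl | rfl | rfl | rfl <;>
    simp only [Fin.isValue, Matrix.cons_val_zero, Matrix.cons_val_one, Matrix.cons_val, dvd_refl,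
      dvd_zero, true_and, add_zero, mul_zero, sub_zero]
  · exact Dvd.intro 0 (by ring)
  · exact ⟨Dvd.intro 2 (by ring), Dvd.intro 1 (by ring)⟩
  · exact ⟨Dvd.intro 2 (by ring), Dvd.intro 0 (by ring)⟩
  · exact Dvd.intro 2 (by ring)

theorem ker_cokerMap_le_span_rows : LinearMap.ker (cokerMap m) ≤ Submodule.span ℤ (rows m) := by
  intro x hx
  obtain ⟨⟨p, hp⟩, ⟨q, hq⟩, ⟨r, hr⟩⟩ := (cokerMap_eq_zero_iff x).mp hx
  have hpq :
      (2 * m + 1) * (q - p) = 2 * ((2 * m + 1) * (2 * m + 2) * r - x 2 + m * (2 * m + 1) * p) := by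
    linear_combination hr - hq + (2 * (m : ℤ) + 1) * hp
  obtain ⟨k, hk⟩ : (2 : ℤ) ∣ q - p :=
    (show IsCoprime (2 : ℤ) (2 * m + 1) from ⟨-m, 1, by ring⟩).dvd_of_dvd_mul_left
      (Dvd.intro _ hpq.symm)
  have hx2 : x 2 = (2 * m + 1) * ((2 * m + 2) * r + m * p - k) :=
    mul_left_cancel₀ two_ne_zero (by linear_combination hpq - (2 * (m : ℤ) + 1) * hk)
  have hx : x = (q - 2 * r) • ![2 * (m : ℤ) + 1, 2 * m + 1, 2 * m ^ 2 + m]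
      + r • ![0, 4 * (m : ℤ) + 2, 4 * m ^ 2 + 4 * m + 1]
      + (r - k) • ![4 * (m : ℤ) + 2, 0, 4 * m ^ 2 + 4 * m + 1] := by
    ext i
    fin_cases i <;>
      simp only [Fin.isValue, Fin.zero_eta, Fin.mk_one, Fin.reduceFinMk, Pi.add_apply, Pi.smul_apply,
        smul_eq_mul, Matrix.cons_val_zero, Matrix.cons_val_one, Matrix.cons_val, mul_zero, add_zero]
    · linear_combination hp - (2 * (m : ℤ) + 1) * hk
    · linear_combination hq
    · linear_combination hx2 - m * (2 * (m : ℤ) + 1) * hk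
  rw [hx]
  refine add_mem (add_mem ?_ ?_) ?_ <;>
    exact Submodule.smul_mem _ _ (Submodule.subset_span (by simp [rows]))

theorem span_rows_eq_ker_cokerMap : Submodule.span ℤ (rows m) = LinearMap.ker (cokerMap m) :=
  le_antisymm (Submodule.span_le.mpr rows_subset_ker_cokerMap) ker_cokerMap_le_span_rows

theorem cokerMap_surjective : Function.Surjective (cokerMap m) := by
  rintro ⟨u, v, w⟩
  obtain ⟨i, rfl⟩ := ZMod.intCast_surjective u
  obtain ⟨j, rfl⟩ := ZMod.intCast_surjective v
  obtain ⟨k, rfl⟩ := ZMod.intCast_surjective w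
  have ha : ((2 * m + 1 : ℕ) : ZMod (2 * m + 1)) = 0 := ZMod.natCast_self _
  push_cast at ha
  refine ⟨![i, (2 * m + 1) * (i + j + k) + j, -(m + 1) * j - m * k],
    Prod.ext rfl (Prod.ext ?_ ?_)⟩
  · simp [cokerMap_apply, ha]
  · exact congrArg Int.cast
      (by ring : 2 * (-(m + 1) * j - m * k) + ((2 * m + 1) * (i + j + k) + j) - (2 * m + 1) * i = k)

end SmithM

theorem stmt10 (m : ℕ) :
    Nonempty
      (((Fin 3 → ℤ) ⧸
          Submodule.span ℤ
            ({![2 * (m : ℤ) + 1, 2 * m + 1, 2 * m ^ 2 + m],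
              ![0, 4 * (m : ℤ) + 2, 4 * m ^ 2 + 4 * m + 1],
              ![4 * (m : ℤ) + 2, 0, 4 * m ^ 2 + 4 * m + 1],
              ![0, 0, 8 * (m : ℤ) ^ 2 + 12 * m + 4]} : Set (Fin 3 → ℤ))) ≃+
        (ZMod (2 * m + 1) × ZMod (2 * m + 1) × ZMod ((2 * m + 1) * (4 * m + 4)))) :=
  ⟨((Submodule.quotEquivOfEq _ _ SmithM.span_rows_eq_ker_cokerMap).trans
    (LinearMap.quotKerEquivOfSurjective _ SmithM.cokerMap_surjective)).toAddEquiv⟩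
end

section
/- Let $n \geq 2$ be even and let $k, l$ be nonzero integers. If $\gcd(\tfrac{1}{2}n(n-1), k) \cdot \gcd(n(n+1), k) = \gcd(\tfrac{1}{2}n(n-1), l) \cdot \gcd(n(n+1), l)$, then $\gcd(n(n^2-1), k) = \gcd(n(n^2-1), l)$. -/
/-!
Compare `p`-adic valuations. If `α ≥ β` are those of `a` and `b`, then `t ↦ min α t + min β t`
is strictly increasing up to `α` and constant afterwards, so equal values at `v_p k` and `v_p l`
force `min μ (v_p k) = min μ (v_p l)` for every `μ ≤ α`. For `a = n(n-1)/2` and `b = n(n+1)`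
this applies to `μ = v_p (n(n²-1))`: for even `n` the odd factor `n - 1` divides `a` and is
coprime to `b`, so `n(n²-1) = (n-1) · n(n+1)` divides `lcm a b`.
-/

theorem min_eq_min_of_min_add_min_eq {a b m x y : ℕ} (hm : m ≤ max a b)
    (h : min a x + min b x = min a y + min b y) : min m x = min m y := by
  omega

theorem Nat.gcd_eq_gcd_of_dvd_lcm_of_gcd_mul_gcd_eq {a b m x y : ℕ} (ha : a ≠ 0) (hb : b ≠ 0)
    (hx : x ≠ 0) (hy : y ≠ 0) (hm : m ∣ Nat.lcm a b)
    (h : Nat.gcd a x * Nat.gcd b x = Nat.gcd a y * Nat.gcd b y) :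
    Nat.gcd m x = Nat.gcd m y := by
  have hab : Nat.lcm a b ≠ 0 := Nat.lcm_ne_zero ha hb
  have hm0 : m ≠ 0 := ne_zero_of_dvd_ne_zero hab hm
  refine Nat.eq_of_factorization_eq (Nat.gcd_ne_zero_left hm0) (Nat.gcd_ne_zero_left hm0)
    fun p => ?_
  have hp := congrArg (fun d => d.factorization p) h
  have hmp := (Nat.factorization_le_iff_dvd hm0 hab).2 hm p
  simp only [Nat.factorization_mul (Nat.gcd_ne_zero_left ha) (Nat.gcd_ne_zero_left hb),
    Nat.factorization_gcd ha hx, Nat.factorization_gcd hb hx, Nat.factorization_gcd ha hy,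
    Nat.factorization_gcd hb hy, Finsupp.add_apply, Finsupp.inf_apply] at hp
  rw [Nat.factorization_lcm ha hb, Finsupp.sup_apply] at hmp
  rw [Nat.factorization_gcd hm0 hx, Nat.factorization_gcd hm0 hy, Finsupp.inf_apply,
    Finsupp.inf_apply]
  exact min_eq_min_of_min_add_min_eq hmp hp

theorem Nat.coprime_mul_add_one_mul_add_two {m : ℕ} (hm : Odd m) :
    m.Coprime ((m + 1) * (m + 2)) :=
  Nat.Coprime.mul_right (by simp) (Nat.coprime_self_add_right.2 (Nat.coprime_two_right.2 hm))

theorem Nat.mul_sq_sub_one_dvd_lcm_choose_two {n : ℕ} (hn : Even n) :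
    n * (n ^ 2 - 1) ∣ Nat.lcm (n.choose 2) (n * (n + 1)) := by
  rcases n with _ | m
  · simp
  have hm : Odd m := by simpa [Nat.even_add_one] using hn
  have hfactor : (m + 1) * ((m + 1) ^ 2 - 1) = m * ((m + 1) * (m + 2)) := by
    rw [show (m + 1) ^ 2 = m * (m + 2) + 1 by ring, Nat.add_sub_cancel]
    ring
  have hdvd_choose : m ∣ (m + 1).choose 2 := by
    rw [Nat.choose_two_right, Nat.add_sub_cancel,
      ← Nat.div_mul_right_comm (even_iff_two_dvd.1 hn)]
    exact dvd_mul_left _ _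
  rw [hfactor]
  exact (Nat.coprime_mul_add_one_mul_add_two hm).mul_dvd_of_dvd_of_dvd
    (hdvd_choose.trans (Nat.dvd_lcm_left _ _)) (Nat.dvd_lcm_right _ _)

theorem stmt12 (n : ℕ) (hn : 2 ≤ n) (hne : Even n) (k l : ℤ) (hk : k ≠ 0) (hl : l ≠ 0)
    (h : Int.gcd ((n * (n - 1) / 2 : ℕ) : ℤ) k * Int.gcd ((n * (n + 1) : ℕ) : ℤ) k =
        Int.gcd ((n * (n - 1) / 2 : ℕ) : ℤ) l * Int.gcd ((n * (n + 1) : ℕ) : ℤ) l) :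
    Int.gcd ((n * (n ^ 2 - 1) : ℕ) : ℤ) k = Int.gcd ((n * (n ^ 2 - 1) : ℕ) : ℤ) l := by
  simp only [Int.gcd_eq_natAbs, Int.natAbs_natCast, ← Nat.choose_two_right] at h ⊢
  exact Nat.gcd_eq_gcd_of_dvd_lcm_of_gcd_mul_gcd_eq (Nat.choose_pos hn).ne' (by positivity)
    (Int.natAbs_ne_zero.2 hk) (Int.natAbs_ne_zero.2 hl)
    (Nat.mul_sq_sub_one_dvd_lcm_choose_two hne) h
end

section
/- Let $n \geq 3$ be odd and let $k, l$ be nonzero integers. If $\gcd(\tfrac{1}{2}n(n^2-1), k) \cdot \gcd(n, k) = \gcd(\tfrac{1}{2}n(n^2-1), l) \cdot \gcd(n, l)$, then $\gcd(\tfrac{1}{2}n(n^2-1), k) = \gcd(\tfrac{1}{2}n(n^2-1), l)$. -/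
/-
Write `n * (n ^ 2 - 1) / 2 = n * m` with `m = (n ^ 2 - 1) / 2`, which is coprime to `n`. Then the
hypothesis reads `gcd(m, k) * gcd(n, k) ^ 2 = gcd(m, l) * gcd(n, l) ^ 2`. By coprimality `gcd(m, k)`
divides `gcd(m, l)` and vice versa, so these factors agree and cancelling them gives
`gcd(n, k) = gcd(n, l)`.
-/

namespace Nat

theorem Coprime.gcd_eq_gcd_of_gcd_mul_gcd_sq_eq {a b x y : ℕ} (hab : Coprime a b)
    (h : gcd a x * gcd b x ^ 2 = gcd a y * gcd b y ^ 2) :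
    gcd a x = gcd a y ∧ gcd b x = gcd b y := by
  have gcd_dvd_gcd : ∀ {x y : ℕ}, gcd a x * gcd b x ^ 2 = gcd a y * gcd b y ^ 2 →
      gcd a x ∣ gcd a y := fun {x y} h =>
    (((hab.coprime_dvd_left (gcd_dvd_left a x)).coprime_dvd_right
      (gcd_dvd_left b y)).pow_right 2).dvd_of_dvd_mul_right (h ▸ Dvd.intro _ rfl)
  have ha : gcd a x = gcd a y := dvd_antisymm (gcd_dvd_gcd h) (gcd_dvd_gcd h.symm)
  refine ⟨ha, ?_⟩
  rcases (gcd a x).eq_zero_or_pos with h0 | h0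
  · obtain rfl : b = 1 := (coprime_zero_left b).mp (eq_zero_of_gcd_eq_zero_left h0 ▸ hab)
    simp
  · rw [ha] at h
    exact pow_left_injective two_ne_zero (Nat.eq_of_mul_eq_mul_left (ha ▸ h0) h)

theorem Coprime.gcd_mul_eq_gcd_mul_of_gcd_mul_mul_gcd_eq {a b x y : ℕ} (hab : Coprime a b)
    (h : gcd (a * b) x * gcd a x = gcd (a * b) y * gcd a y) :
    gcd (a * b) x = gcd (a * b) y := by
  have split : ∀ z, gcd (a * b) z = gcd b z * gcd a z := fun z => by
    rw [gcd_comm, hab.gcd_mul, gcd_comm z, gcd_comm z, mul_comm]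
  rw [split, split, mul_assoc, mul_assoc, ← sq, ← sq] at h
  obtain ⟨hb, ha⟩ := hab.symm.gcd_eq_gcd_of_gcd_mul_gcd_sq_eq h
  rw [split, split, ha, hb]

theorem coprime_self_sq_sub_one {n : ℕ} (hn : 0 < n) : Coprime n (n ^ 2 - 1) :=
  ((coprime_self_sub_right (one_le_pow 2 n hn)).mpr (coprime_one_right _)).coprime_dvd_left
    (dvd_pow_self n two_ne_zero)

end Nat

theorem stmt13_general (n : ℕ) (hno : Odd n) (k l : ℤ)
    (h : Int.gcd ((n * (n ^ 2 - 1) / 2 : ℕ) : ℤ) k * Int.gcd ((n : ℕ) : ℤ) k =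
        Int.gcd ((n * (n ^ 2 - 1) / 2 : ℕ) : ℤ) l * Int.gcd ((n : ℕ) : ℤ) l) :
    Int.gcd ((n * (n ^ 2 - 1) / 2 : ℕ) : ℤ) k = Int.gcd ((n * (n ^ 2 - 1) / 2 : ℕ) : ℤ) l := by
  have two_dvd : 2 ∣ n ^ 2 - 1 := (Nat.Odd.sub_odd hno.pow odd_one).two_dvd
  have hcop : n.Coprime ((n ^ 2 - 1) / 2) :=
    (Nat.coprime_self_sq_sub_one hno.pos).coprime_dvd_right (Nat.div_dvd_of_dvd two_dvd)
  simp only [Int.gcd_eq_natAbs, Int.natAbs_natCast, Nat.mul_div_assoc n two_dvd] at h ⊢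
  exact hcop.gcd_mul_eq_gcd_mul_of_gcd_mul_mul_gcd_eq h

theorem stmt13 (n : ℕ) (hn : 3 ≤ n) (hno : Odd n) (k l : ℤ) (hk : k ≠ 0) (hl : l ≠ 0)
    (h : Int.gcd ((n * (n ^ 2 - 1) / 2 : ℕ) : ℤ) k * Int.gcd ((n : ℕ) : ℤ) k =
        Int.gcd ((n * (n ^ 2 - 1) / 2 : ℕ) : ℤ) l * Int.gcd ((n : ℕ) : ℤ) l) :
    Int.gcd ((n * (n ^ 2 - 1) / 2 : ℕ) : ℤ) k = Int.gcd ((n * (n ^ 2 - 1) / 2 : ℕ) : ℤ) l :=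
  stmt13_general n hno k l h
end

section
/- Let $n$ be even and let $S \subseteq \mathbb{Z}^3$ be the subgroup generated by the rows of $\begin{pmatrix} 1 & 0 & 0 \\ 2 & 0 & 0 \\ 0 & 1 & n+1 \\ 0 & 0 & 2n+2 \end{pmatrix}$ scaled by $N = \tfrac{n(n-1)}{2}(n-2)!$, and let $\mu = (1,0,0)$, $\nu = (0,0,n-1)$ scaled by $(n-2)!$. For an integer $k$, the subgroup of $\mathbb{Z}^3/S$ generated by the images of $k(n-2)!\mu'$ and $k(n-2)!\nu'$ (where $\mu' = (1,0,0)$, $\nu' = (0,0,n-1)$) has order $\frac{\frac{1}{2}n(n-1)}{\gcd(\frac{1}{2}n(n-1), k)} \cdot \frac{n(n+1)}{\gcd(n(n+1), k)}$. -/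
/-!
The lattice `S` is the kernel of `v ↦ (v₀ mod N, v₁ mod N, v₂ - (n+1)v₁ mod N(2n+2))`, so `ℤ³/S`
embeds into `ℤ/N × ℤ/N × ℤ/N(2n+2)`. There `k(n-2)!μ'` and `k(n-2)!ν'` land in the first and the
third factor, so they generate a subgroup whose order is the product of their additive orders.
Writing `N = ½n(n-1)·(n-2)!` and `N(2n+2) = n(n+1)·(n-1)(n-2)!`, the factor `(n-2)!` (resp.
`(n-1)(n-2)!`) cancels from each order, leaving the two quotients of the formula.
-/

open Submodule

section

variable {R M M₂ : Type*} [Ring R] [AddCommGroup M] [AddCommGroup M₂] [Module R M] [Module R M₂]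

theorem LinearMap.card_span_image_mk_ker (f : M →ₗ[R] M₂) (s : Set M) :
    Nat.card (span R (Submodule.Quotient.mk '' s : Set (M ⧸ ker f))) =
      Nat.card (span R (f '' s)) := by
  have hinj : Function.Injective ((ker f).liftQ f le_rfl) :=
    LinearMap.ker_eq_bot.mp (ker_liftQ_eq_bot' _ f rfl)
  rw [Nat.card_congr (equivMapOfInjective _ hinj _).toEquiv, map_span, ← Set.image_comp]
  rfl

theorem Submodule.card_prod (p : Submodule R M) (q : Submodule R M₂) :
    Nat.card (p.prod q) = Nat.card p * Nat.card q := by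
  rw [← Nat.card_prod]
  exact Nat.card_congr ((Equiv.setCongr (prod_coe p q)).trans (Equiv.Set.prod _ _))

end

section

variable {A B : Type*} [AddCommGroup A] [AddCommGroup B]

theorem Submodule.card_span_singleton_int (x : A) :
    Nat.card (span ℤ {x}) = addOrderOf x := by
  rw [← Nat.card_zmultiples, ← span_singleton_toAddSubgroup_eq_zmultiples]
  rfl

theorem Submodule.card_span_inl_inr_int (x : A) (y : B) :
    Nat.card (span ℤ {(x, 0), (0, y)}) = addOrderOf x * addOrderOf y := by
  have h := LinearMap.span_inl_union_inr (R := ℤ) (s := {x}) (t := {y})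
  simp only [Set.image_singleton, LinearMap.inl_apply, LinearMap.inr_apply,
    Set.singleton_union] at h
  rw [h, card_prod, card_span_singleton_int, card_span_singleton_int]

end

theorem ZMod.addOrderOf_intCast (m : ℤ) {n : ℕ} (hn : n ≠ 0) :
    addOrderOf (m : ZMod n) = n / n.gcd m.natAbs := by
  obtain ⟨a, rfl | rfl⟩ := Int.eq_nat_or_neg m <;>
    simp [ZMod.addOrderOf_coe _ hn]

theorem Nat.mul_right_div_gcd_mul_right (a b : ℕ) {c : ℕ} (hc : 0 < c) :
    a * c / (a * c).gcd (b * c) = a / a.gcd b := by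
  rw [Nat.gcd_mul_right, Nat.mul_div_mul_right _ _ hc]

def shearReduction (a b : ℕ) (t : ℤ) : (Fin 3 → ℤ) →ₗ[ℤ] ZMod a × ZMod a × ZMod b where
  toFun v := ((v 0 : ZMod a), (v 1 : ZMod a), ((v 2 - t * v 1 : ℤ) : ZMod b))
  map_add' u v := by
    simp only [Pi.add_apply, Int.cast_add, Prod.mk_add_mk]
    push_cast
    ring_nf
  map_smul' c v := by
    simp only [Pi.smul_apply, smul_eq_mul, Int.cast_mul, RingHom.id_apply, Prod.smul_mk,
      zsmul_eq_mul]
    push_cast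
    ring_nf

theorem ker_shearReduction (a s : ℕ) (t : ℤ) :
    LinearMap.ker (shearReduction a (a * s) t) =
      span ℤ {(a : ℤ) • ![1, 0, 0], (a : ℤ) • ![0, 1, t], (a : ℤ) • ![0, 0, (s : ℤ)]} := by
  refine le_antisymm (fun v hv => ?_) (span_le.mpr ?_)
  · simp only [LinearMap.mem_ker, shearReduction, LinearMap.coe_mk, AddHom.coe_mk,
      Prod.mk_eq_zero, ZMod.intCast_zmod_eq_zero_iff_dvd] at hv
    obtain ⟨⟨c₀, hc₀⟩, ⟨c₁, hc₁⟩, ⟨c₂, hc₂⟩⟩ := hv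
    have hv : v = c₀ • ((a : ℤ) • ![1, 0, 0]) + c₁ • ((a : ℤ) • ![0, 1, t])
        + c₂ • ((a : ℤ) • ![0, 0, (s : ℤ)]) := by
      ext i
      fin_cases i
      · simp [hc₀, mul_comm]
      · simp [hc₁, mul_comm]
      · push_cast at hc₂
        simp only [Fin.reduceFinMk, Pi.add_apply, Pi.smul_apply, smul_eq_mul, Matrix.cons_val]
        linear_combination hc₂ + t * hc₁
    rw [hv]
    exact add_mem (add_mem (smul_mem _ _ (subset_span (by simp)))
      (smul_mem _ _ (subset_span (by simp)))) (smul_mem _ _ (subset_span (by simp)))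
  · rintro _ (rfl | rfl | rfl)
    · simp [shearReduction]
    · simp [shearReduction, mul_comm]
    · simp [shearReduction]
      exact_mod_cast ZMod.natCast_self (a * s)

theorem span_eq_ker_shearReduction (a s : ℕ) (t : ℤ) :
    span ℤ {(a : ℤ) • ![1, 0, 0], (a : ℤ) • ![2, 0, 0], (a : ℤ) • ![0, 1, t],
      (a : ℤ) • ![0, 0, (s : ℤ)]} = LinearMap.ker (shearReduction a (a * s) t) := by
  have h2 : (a : ℤ) • (![2, 0, 0] : Fin 3 → ℤ) = (2 : ℤ) • ((a : ℤ) • ![1, 0, 0]) := by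
    rw [smul_comm]; simp
  rw [ker_shearReduction, Set.insert_comm,
    span_insert_eq_span (h2 ▸ smul_mem _ 2 (subset_span (Set.mem_insert _ _)))]

theorem stmt14_general (n : ℕ) (hn : 4 ≤ n) (k : ℤ) :
    Nat.card
      (Submodule.span ℤ
        ({Submodule.Quotient.mk
            ((k * ((n - 2).factorial : ℤ)) • (![1, 0, 0] : Fin 3 → ℤ)),
          Submodule.Quotient.mk
            ((k * ((n - 2).factorial : ℤ)) • (![0, 0, (n : ℤ) - 1] : Fin 3 → ℤ))} :
          Set ((Fin 3 → ℤ) ⧸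
            Submodule.span ℤ
              ({((n * (n - 1) / 2 * (n - 2).factorial : ℕ) : ℤ) • ![1, 0, 0],
                ((n * (n - 1) / 2 * (n - 2).factorial : ℕ) : ℤ) • ![2, 0, 0],
                ((n * (n - 1) / 2 * (n - 2).factorial : ℕ) : ℤ) • ![0, 1, (n : ℤ) + 1],
                ((n * (n - 1) / 2 * (n - 2).factorial : ℕ) : ℤ) •
                  ![0, 0, 2 * (n : ℤ) + 2]} : Set (Fin 3 → ℤ))))) =
      n * (n - 1) / 2 / Int.gcd ((n * (n - 1) / 2 : ℕ) : ℤ) k *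
        (n * (n + 1) / Int.gcd ((n * (n + 1) : ℕ) : ℤ) k) := by
  set F := (n - 2).factorial
  set M := n * (n - 1) / 2
  have hF : 0 < F := Nat.factorial_pos _
  have hM : M * 2 = n * (n - 1) := Nat.div_mul_cancel (Nat.even_mul_pred_self n).two_dvd
  have hMpos : 0 < M := by
    have : 4 * 3 ≤ n * (n - 1) := Nat.mul_le_mul hn (by omega)
    omega
  have hB : M * F * (2 * n + 2) = n * (n + 1) * ((n - 1) * F) := by
    calc M * F * (2 * n + 2) = M * 2 * ((n + 1) * F) := by ring
      _ = n * (n + 1) * ((n - 1) * F) := by rw [hM]; ring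
  have h2n : 2 * (n : ℤ) + 2 = ((2 * n + 2 : ℕ) : ℤ) := by push_cast; ring
  have hn1 : (n : ℤ) - 1 = ((n - 1 : ℕ) : ℤ) := by omega
  rw [h2n, span_eq_ker_shearReduction, ← Set.image_pair, LinearMap.card_span_image_mk_ker,
    Set.image_pair, hn1]
  have hμ : shearReduction (M * F) (M * F * (2 * n + 2)) (n + 1) ((k * F) • ![1, 0, 0]) =
      (((k * F : ℤ) : ZMod (M * F)), 0) := by
    simp [shearReduction]
  have hν : shearReduction (M * F) (M * F * (2 * n + 2)) (n + 1)
      ((k * F) • ![0, 0, ((n - 1 : ℕ) : ℤ)]) = (0, 0, ((k * F * (n - 1 : ℕ) : ℤ) : ZMod _)) := by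
    simp [shearReduction]
  have hνabs : (k * F * (n - 1 : ℕ)).natAbs = k.natAbs * ((n - 1) * F) := by
    simp only [Int.natAbs_mul, Int.natAbs_natCast]; ring
  rw [hμ, hν, card_span_inl_inr_int, Prod.addOrderOf, addOrderOf_zero, Nat.lcm_one_left,
    ZMod.addOrderOf_intCast _ (by positivity), ZMod.addOrderOf_intCast _ (by positivity),
    Int.natAbs_mul, Int.natAbs_natCast, hνabs, hB, Nat.mul_right_div_gcd_mul_right _ _ hF,
    Nat.mul_right_div_gcd_mul_right _ _ (Nat.mul_pos (by omega) hF)]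
  rfl

theorem stmt14 (n : ℕ) (hn : 4 ≤ n) (hne : Even n) (k : ℤ) :
    Nat.card
      (Submodule.span ℤ
        ({Submodule.Quotient.mk
            ((k * ((n - 2).factorial : ℤ)) • (![1, 0, 0] : Fin 3 → ℤ)),
          Submodule.Quotient.mk
            ((k * ((n - 2).factorial : ℤ)) • (![0, 0, (n : ℤ) - 1] : Fin 3 → ℤ))} :
          Set ((Fin 3 → ℤ) ⧸
            Submodule.span ℤ
              ({((n * (n - 1) / 2 * (n - 2).factorial : ℕ) : ℤ) • ![1, 0, 0],
                ((n * (n - 1) / 2 * (n - 2).factorial : ℕ) : ℤ) • ![2, 0, 0],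
                ((n * (n - 1) / 2 * (n - 2).factorial : ℕ) : ℤ) • ![0, 1, (n : ℤ) + 1],
                ((n * (n - 1) / 2 * (n - 2).factorial : ℕ) : ℤ) •
                  ![0, 0, 2 * (n : ℤ) + 2]} : Set (Fin 3 → ℤ))))) =
      n * (n - 1) / 2 / Int.gcd ((n * (n - 1) / 2 : ℕ) : ℤ) k *
        (n * (n + 1) / Int.gcd ((n * (n + 1) : ℕ) : ℤ) k) :=
  stmt14_general n hn k
end

section
/- Let $n \geq 3$ and let $S \subseteq \mathbb{Z}^3$ be the span of $v_1 = (\tfrac{n(n-1)}{2}, n, \tfrac{n(n+1)}{2})$, $v_2 = (n(n-1), 0, 0)$, $v_3 = (0, 2n, 0)$. Then $(1,0,1) \notin S$ whenever $n(n^2-1) > 2$; more precisely, if $m(1,0,1) \in S$ with $m > 0$ then $\tfrac{1}{2}n(n^2-1) \mid m$. -/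
/-!
Write `m • (1, 0, 1) = a • v₁ + b • v₂ + c • v₃`. Doubling the first and third coordinates gives
`2m = a n(n-1) + 2b n(n-1)` and `2m = a n(n+1)`; their difference `2an = 2bn(n-1)` forces
`a = b(n-1)` (or `n = 0`, where `m = 0`), and then `2m = b n(n²-1)`, i.e. `m = b · n(n²-1)/2`.
-/

open Submodule

/-- The lattice `S` of the statement, for an integer parameter `N`. -/
def halfIntegerLattice (N : ℤ) : Submodule ℤ (Fin 3 → ℤ) :=
  span ℤ {![N * (N - 1) / 2, N, N * (N + 1) / 2], ![N * (N - 1), 0, 0], ![0, 2 * N, 0]}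

theorem Int.two_mul_ediv_two_mul_sq_sub_one (N : ℤ) :
    2 * (N * (N ^ 2 - 1) / 2) = N * (N ^ 2 - 1) := by
  refine Int.mul_ediv_cancel' ?_
  rw [show N * (N ^ 2 - 1) = N * (N - 1) * (N + 1) by ring]
  exact (Int.even_mul_pred_self N).two_dvd.mul_right _

namespace halfIntegerLattice

variable {N m : ℤ}

theorem exists_coeffs_of_smul_mem (h : m • ![1, 0, 1] ∈ halfIntegerLattice N) :
    ∃ a b : ℤ, 2 * m = a * (N * (N - 1)) + 2 * b * (N * (N - 1)) ∧
      2 * m = a * (N * (N + 1)) := by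
  obtain ⟨a, w, hw, hv⟩ := mem_span_insert.mp h
  obtain ⟨b, c, rfl⟩ := mem_span_pair.mp hw
  have h0 := congrFun hv 0
  have h2 := congrFun hv 2
  simp only [Fin.isValue, Pi.smul_apply, Matrix.cons_val, Pi.add_apply, smul_eq_mul,
    mul_one, mul_zero, add_zero] at h0 h2
  have hA := Int.mul_ediv_cancel' (Int.even_mul_pred_self N).two_dvd
  have hB := Int.mul_ediv_cancel' (Int.even_mul_succ_self N).two_dvd
  exact ⟨a, b, by linear_combination 2 * h0 + a * hA, by linear_combination 2 * h2 + a * hB⟩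

theorem dvd_of_smul_mem (h : m • ![1, 0, 1] ∈ halfIntegerLattice N) :
    N * (N ^ 2 - 1) / 2 ∣ m := by
  obtain ⟨a, b, h0, h2⟩ := exists_coeffs_of_smul_mem h
  rcases eq_or_ne N 0 with rfl | hN
  · have : m = 0 := by linarith
    simp [this]
  have ha : a = b * (N - 1) :=
    mul_right_cancel₀ (mul_ne_zero hN two_ne_zero) (by linear_combination h0 - h2)
  have hD := Int.two_mul_ediv_two_mul_sq_sub_one N
  refine ⟨b, ?_⟩
  have : 2 * m = 2 * (N * (N ^ 2 - 1) / 2 * b) := by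
    linear_combination h2 - b * hD + ha * (N * (N + 1))
  omega

end halfIntegerLattice

theorem stmt18_general (n : ℕ) :
    (∀ m : ℤ, 0 < m →
        m • (![1, 0, 1] : Fin 3 → ℤ) ∈
          Submodule.span ℤ
            ({![(n : ℤ) * (n - 1) / 2, (n : ℤ), (n : ℤ) * (n + 1) / 2],
              ![(n : ℤ) * (n - 1), 0, 0],
              ![0, 2 * (n : ℤ), 0]} : Set (Fin 3 → ℤ)) →
        ((n : ℤ) * (n ^ 2 - 1) / 2) ∣ m) ∧
      (2 < n * (n ^ 2 - 1) →
        (![1, 0, 1] : Fin 3 → ℤ) ∉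
          Submodule.span ℤ
            ({![(n : ℤ) * (n - 1) / 2, (n : ℤ), (n : ℤ) * (n + 1) / 2],
              ![(n : ℤ) * (n - 1), 0, 0],
              ![0, 2 * (n : ℤ), 0]} : Set (Fin 3 → ℤ))) := by
  refine ⟨fun m _ hm ↦ halfIntegerLattice.dvd_of_smul_mem hm, fun hbig hmem ↦ ?_⟩
  have hdvd : (n : ℤ) * (n ^ 2 - 1) / 2 ∣ 1 :=
    halfIntegerLattice.dvd_of_smul_mem (m := 1) (by rw [one_smul]; exact hmem)
  have hn : 1 ≤ n ^ 2 := Nat.one_le_pow _ _ (Nat.pos_of_ne_zero (by rintro rfl; simp at hbig))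
  zify [hn] at hbig
  have hD := Int.two_mul_ediv_two_mul_sq_sub_one n
  have := Int.le_of_dvd one_pos hdvd
  linarith

theorem stmt18 (n : ℕ) (hn : 3 ≤ n) :
    (∀ m : ℤ, 0 < m →
        m • (![1, 0, 1] : Fin 3 → ℤ) ∈
          Submodule.span ℤ
            ({![(n : ℤ) * (n - 1) / 2, (n : ℤ), (n : ℤ) * (n + 1) / 2],
              ![(n : ℤ) * (n - 1), 0, 0],
              ![0, 2 * (n : ℤ), 0]} : Set (Fin 3 → ℤ)) →
        ((n : ℤ) * (n ^ 2 - 1) / 2) ∣ m) ∧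
      (2 < n * (n ^ 2 - 1) →
        (![1, 0, 1] : Fin 3 → ℤ) ∉
          Submodule.span ℤ
            ({![(n : ℤ) * (n - 1) / 2, (n : ℤ), (n : ℤ) * (n + 1) / 2],
              ![(n : ℤ) * (n - 1), 0, 0],
              ![0, 2 * (n : ℤ), 0]} : Set (Fin 3 → ℤ))) :=
  stmt18_general n
end
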